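/- Let K = (X, (→_a)_{a∈Σ}, ρ) be a Kripke structure over Σ with atomic proposition t₀, and suppose some world x ∈ X satisfies both φ_snake and φ_recur. Then K contains a snake σ on which infinitely many first-column worlds satisfy t₀; that is, there is a snake σ: ℕ → X such that the set of positions p ∈ ℕ with t₀ ∈ ρ(σ(p)) and σ(p) a first-column world of σ is infinite. -/

import Mathlib

/-- The six-letter alphabet `Σ = {a₁, a₂, b₁, b₂, c, d}`. -/
inductive Letter where
  | a1 | a2 | b1 | b2 | c | d
deriving DecidableEq

instance instFintypeLetter : Fintype Letter :=
  ⟨{.a1, .a2, .b1, .b2, .c, .d}, fun x => by cases x <;> simp⟩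

/-- `w^i`: the `i`-fold concatenation of the word `w`. -/
def wpow (w : List Letter) (i : ℕ) : List Letter :=
  (List.replicate i w).flatten

/-- Given a Kripke structure with transition relations `R a` for each letter `a`, the
relation `[[w]]` of a word `w`: the relational composition of the `R a` along `w`
(the identity for the empty word). -/
def wordRel {X : Type} (R : Letter → X → X → Prop) : List Letter → X → X → Prop
  | [] => fun x y => x = y
  | a :: w => fun x z => ∃ y, R a x y ∧ wordRel R w y z

/-- `L₀ = {(a₁b₂)^i d (a₂b₁)^j c : i, j ≥ 0, j ≠ i+1}`. -/
def L0 : Set (List Letter) :=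
  {w | ∃ i j : ℕ, j ≠ i + 1 ∧
    w = wpow [.a1, .b2] i ++ [.d] ++ wpow [.a2, .b1] j ++ [.c]}

/-- `L₁ = {(a₂b₁)^i c (a₁b₂)^j d : i, j ≥ 0, j ≠ i+1}`. -/
def L1 : Set (List Letter) :=
  {w | ∃ i j : ℕ, j ≠ i + 1 ∧
    w = wpow [.a2, .b1] i ++ [.c] ++ wpow [.a1, .b2] j ++ [.d]}

/-- The `r`-th block `c (a₁b₂)^{2r+1} d (a₂b₁)^{2r+2}` of the snake word. -/
def snakeBlock (r : ℕ) : List Letter :=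
  [.c] ++ wpow [.a1, .b2] (2 * r + 1) ++ [.d] ++ wpow [.a2, .b1] (2 * r + 2)

/-- The `(p+1)`-st letter of the infinite snake word
`W = c (a₁b₂)^1 d (a₂b₁)^2 c (a₁b₂)^3 d (a₂b₁)^4 c ⋯`
(the concatenation of the first `p+1` blocks has length `> p`, so the `getD` default
is never used). -/
def snakeWord (p : ℕ) : Letter :=
  (((List.range (p + 1)).map snakeBlock).flatten).getD p .c

/-- A snake in a Kripke structure: an infinite path labeled by the snake word `W`. -/
def IsSnake {X : Type} (R : Letter → X → X → Prop) (σ : ℕ → X) : Prop :=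
  ∀ p : ℕ, R (snakeWord p) (σ p) (σ (p + 1))

/-- `(K, x) ⊨ φ_snake`:
(i) `⟨c a₁ b₂ d (a₂b₁)² c⟩ true`;
(ii) `[Σ* c](⟨(a₁b₂)* d⟩ true ∧ [L₀] false)`;
(iii) `[Σ* d](⟨(a₂b₁)* c⟩ true ∧ [L₁] false)`. -/
def PhiSnake {X : Type} (R : Letter → X → X → Prop) (x : X) : Prop :=
  (∃ y, wordRel R [.c, .a1, .b2, .d, .a2, .b1, .a2, .b1, .c] x y) ∧
  (∀ y, (∃ u : List Letter, wordRel R (u ++ [.c]) x y) →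
    (∃ i : ℕ, ∃ z, wordRel R (wpow [.a1, .b2] i ++ [.d]) y z) ∧
    ¬ ∃ z, ∃ w ∈ L0, wordRel R w y z) ∧
  (∀ y, (∃ u : List Letter, wordRel R (u ++ [.d]) x y) →
    (∃ i : ℕ, ∃ z, wordRel R (wpow [.a2, .b1] i ++ [.c]) y z) ∧
    ¬ ∃ z, ∃ w ∈ L1, wordRel R w y z)


/-- Letters of `Σ` extended with the test `t₀?`. -/
inductive Tok where
  | letter (a : Letter)
  | test
deriving DecidableEq

/-- The relation `[[w]]` of a word `w` over `Σ` extended with the test `t₀?`, where the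
test holds at the worlds in `T`: `[[a]] = →_a`, `[[t₀?]] = {(x,x) : T x}`, composed. -/
def tokRel {X : Type} (R : Letter → X → X → Prop) (T : X → Prop) :
    List Tok → X → X → Prop
  | [] => fun x y => x = y
  | .letter a :: w => fun x z => ∃ y, R a x y ∧ tokRel R T w y z
  | .test :: w => fun x z => T x ∧ tokRel R T w x z

/-- Kleene star of a language: all concatenations of finitely many words of `L`. -/
def star {α : Type} (L : Set (List α)) : Set (List α) :=
  {w | ∃ ws : List (List α), (∀ u ∈ ws, u ∈ L) ∧ ws.flatten = w}

/-- `π↕`: the language of the regular expression `(a₁b₂)* d (a₂b₁)* c` over `Σ`. -/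
def piNS : Set (List Letter) :=
  {w | ∃ i j : ℕ, w = wpow [.a1, .b2] i ++ [.d] ++ wpow [.a2, .b1] j ++ [.c]}

/-- `β`: the language of the regular expression
`π↕* ( a₁ b₂ t₀? π↕ ∪ (a₁b₂)* d (a₂b₁)* t₀? c )` over `Σ` extended with the test `t₀?`. -/
def beta : Set (List Tok) :=
  {w | ∃ s v : List Tok,
    (∃ s' ∈ star piNS, s = s'.map Tok.letter) ∧
    ((∃ p ∈ piNS, v = [Tok.letter .a1, Tok.letter .b2, Tok.test] ++ p.map Tok.letter) ∨
     (∃ i j : ℕ, v = (wpow [.a1, .b2] i).map Tok.letter ++ [Tok.letter .d] ++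
        (wpow [.a2, .b1] j).map Tok.letter ++ [Tok.test, Tok.letter .c])) ∧
    w = s ++ v}

/-- `(K, x) ⊨ φ_recur`: for every `y` with `(x, y) ∈ [[Σ* c]]` there is `z` with
`(y, z) ∈ [[β]]`, where the test `t₀?` holds at worlds whose valuation contains `t₀`. -/
def PhiRecur {X : Type} (R : Letter → X → X → Prop)
    {P : Type} (ρ : X → Set P) (t0 : P) (x : X) : Prop :=
  ∀ y, (∃ u : List Letter, wordRel R (u ++ [.c]) x y) →
    ∃ z, ∃ w ∈ beta, tokRel R (fun v => t0 ∈ ρ v) w y z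

/-- Position `p` of a snake is a first-column position: either `W(p) = c`, or `p ≥ 3`
and `W(p−3) W(p−2) W(p−1) = c a₁ b₂`. -/
def FirstCol (p : ℕ) : Prop :=
  snakeWord p = .c ∨
  (3 ≤ p ∧ snakeWord (p - 3) = .c ∧ snakeWord (p - 2) = .a1 ∧ snakeWord (p - 1) = .b2)

/-!
Call `y` a block entry for `r` if it is reached by a `c` that closes a column `(a₂b₁)^{2r}`
starting at a `d`-reached world: this is what the world at position `blockStart r + 1` of a
snake looks like. Clauses (ii) and (iii) of `φ_snake` kill every `π↕`-path out of a block entry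
except the one labelled `(a₁b₂)^{2r+1} d (a₂b₁)^{2r+2} c`, which is the next block of the snake
word and ends in a block entry for `r + 1`. So the `β`-path that `φ_recur` provides follows the
snake word, and its test `t₀?` sits at a first-column position (right after `c a₁ b₂`, or on a
`c`). Choosing such paths repeatedly gives a chain of ever longer snake prefixes, each one
passing one more `t₀`-world in the first column, and their limit is the required snake.
-/

section

variable {α X : Type}

def factor (W : ℕ → α) (a b : ℕ) : List α := (List.range' a (b - a)).map W

section Factor

variable (W : ℕ → α) {a b c : ℕ}

@[simp] theorem length_factor : (factor W a b).length = b - a := by simp [factor]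

@[simp] theorem factor_self : factor W a a = [] := by simp [factor]

theorem factor_eq_cons (h : a < b) : factor W a b = W a :: factor W (a + 1) b := by
  obtain ⟨n, rfl⟩ := Nat.exists_eq_add_of_lt h
  simp [factor, show a + n + 1 - a = n + 1 by omega, show a + n + 1 - (a + 1) = n by omega,
    List.range'_succ]

theorem factor_append (hab : a ≤ b) (hbc : b ≤ c) :
    factor W a b ++ factor W b c = factor W a c := by
  have h := List.range'_append (s := a) (m := b - a) (n := c - b) (step := 1)
  rw [show a + 1 * (b - a) = b by omega, show b - a + (c - b) = c - a by omega] at h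
  simp only [factor, ← List.map_append, h]

theorem factor_concat (hab : a ≤ b) : factor W a (b + 1) = factor W a b ++ [W b] := by
  rw [← factor_append W hab b.le_succ, factor_eq_cons W b.lt_succ_self, factor_self]

theorem eq_factor_of_append_eq (hab : a ≤ b) {u v : List α} (h : u ++ v = factor W a b) :
    u = factor W a (a + u.length) ∧ v = factor W (a + u.length) b := by
  have hlen := congrArg List.length h
  simp only [List.length_append, length_factor] at hlen
  rw [← factor_append W (b := a + u.length) (by omega) (by omega)] at h
  exact List.append_inj h (by simp)

end Factor

theorem wordRel_append {R : Letter → X → X → Prop} {u v : List Letter} {x z : X} :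
    wordRel R (u ++ v) x z ↔ ∃ y, wordRel R u x y ∧ wordRel R v y z := by
  induction u generalizing x with
  | nil => simp [wordRel]
  | cons a u ih => simp only [List.cons_append, wordRel, ih]; aesop

section Path

variable (R : α → X → X → Prop) (W : ℕ → α)

def PathOn (σ : ℕ → X) (a b : ℕ) : Prop :=
  ∀ p, a ≤ p → p < b → R (W p) (σ p) (σ (p + 1))

variable {R W}

theorem PathOn.glue {σ τ : ℕ → X} {a b c : ℕ} (hσ : PathOn R W σ a b) (hτ : PathOn R W τ b c)
    (h : σ b = τ b) :
    ∃ ρ, PathOn R W ρ a c ∧ (∀ p ≤ b, ρ p = σ p) ∧ ∀ p, b ≤ p → ρ p = τ p := by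
  refine ⟨fun p => if p ≤ b then σ p else τ p, ?_, fun p hp => if_pos hp, fun p hp => ?_⟩
  · intro p hap hpc
    rcases lt_or_ge p b with hpb | hpb
    · simpa only [if_pos hpb.le, if_pos (Nat.succ_le_of_lt hpb)] using hσ p hap hpb
    · simp only [if_neg (show ¬p + 1 ≤ b by omega)]
      split_ifs with hp
      · exact le_antisymm hp hpb ▸ h ▸ hτ b le_rfl (by omega)
      · exact hτ p hpb hpc
  · show (if p ≤ b then σ p else τ p) = τ p
    split_ifs with hpb
    exacts [le_antisymm hpb hp ▸ h, rfl]

end Path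

theorem exists_pathOn_of_wordRel {R : Letter → X → X → Prop} {W : ℕ → Letter} {a b : ℕ}
    {y z : X} (h : wordRel R (factor W a b) y z) :
    ∃ f, PathOn R W f a b ∧ f a = y ∧ f b = z := by
  induction hn : b - a generalizing a y with
  | zero =>
    have hyz : y = z := by rwa [factor, hn] at h
    exact ⟨fun _ => y, fun p hap hpb => by omega, rfl, hyz⟩
  | succ n ih =>
    rw [factor_eq_cons W (by omega)] at h
    obtain ⟨y₁, hy₁, h⟩ := h
    obtain ⟨f, hf, hf₁, hfb⟩ := ih h (by omega)
    refine ⟨Function.update f a y, fun p hap hpb => ?_, Function.update_self .., ?_⟩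
    · rw [Function.update_of_ne (show p + 1 ≠ a by omega)]
      rcases hap.eq_or_lt with rfl | hap
      · rwa [Function.update_self, hf₁]
      · rw [Function.update_of_ne hap.ne']
        exact hf p hap hpb
    · rwa [Function.update_of_ne (show b ≠ a by omega)]

section Chain

variable {R : α → X → X → Prop} {W : ℕ → α}

theorem exists_path_of_chain (σ : ℕ → ℕ → X) (a : ℕ → ℕ) (ha : StrictMono a)
    (hpath : ∀ n, PathOn R W (σ n) 0 (a n)) (hagree : ∀ n, ∀ q ≤ a n, σ (n + 1) q = σ n q) :
    ∃ τ : ℕ → X, (∀ p, R (W p) (τ p) (τ (p + 1))) ∧ ∀ n, ∀ q ≤ a n, τ q = σ n q := by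
  have hagree' : ∀ n m, n ≤ m → ∀ q ≤ a n, σ m q = σ n q := by
    intro n m hnm
    induction m, hnm using Nat.le_induction with
    | base => exact fun _ _ => rfl
    | succ m hm ih => exact fun q hq => (hagree m q (hq.trans (ha.monotone hm))).trans (ih q hq)
  have hle : ∀ n, n ≤ a n := ha.id_le
  have hτ : ∀ n, ∀ q ≤ a n, σ q q = σ n q := fun n q hq =>
    (hagree' q (max q n) (le_max_left _ _) q (hle q)).symm.trans
      (hagree' n (max q n) (le_max_right _ _) q hq)
  refine ⟨fun p => σ p p, fun p => ?_, hτ⟩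
  dsimp only
  rw [hτ (p + 1) p ((Nat.le_succ p).trans (hle _))]
  exact hpath (p + 1) p p.zero_le (Nat.lt_of_lt_of_le p.lt_succ_self (hle _))

end Chain

section Extension

variable {R : Letter → X → X → Prop} {W : ℕ → Letter} {G Q : ℕ → X → Prop}
  (hext : ∀ a y, G a y → ∃ s b zt z, a ≤ s ∧ s < b ∧ Q s zt ∧ G b z ∧
    wordRel R (factor W a s) y zt ∧ wordRel R (factor W s b) zt z)
include hext

theorem exists_extension_of_pathOn {σ : ℕ → X} {a : ℕ} (hσ : PathOn R W σ 0 a)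
    (hG : G a (σ a)) :
    ∃ σ' b, a < b ∧ PathOn R W σ' 0 b ∧ G b (σ' b) ∧ (∀ q ≤ a, σ' q = σ q) ∧
      ∃ s, a ≤ s ∧ s < b ∧ Q s (σ' s) := by
  obtain ⟨s, b, zt, z, has, hsb, hQ, hGz, h₁, h₂⟩ := hext a (σ a) hG
  obtain ⟨f₁, hf₁, hf₁a, hf₁s⟩ := exists_pathOn_of_wordRel h₁
  obtain ⟨f₂, hf₂, hf₂s, hf₂b⟩ := exists_pathOn_of_wordRel h₂
  obtain ⟨g, hg, hg₁, hg₂⟩ := hf₁.glue hf₂ (hf₁s.trans hf₂s.symm)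
  obtain ⟨σ', hσ', hσ'₁, hσ'₂⟩ := hσ.glue hg ((hg₁ a has).trans hf₁a).symm
  refine ⟨σ', b, by omega, hσ', ?_, hσ'₁, s, has, hsb, ?_⟩
  · rwa [hσ'₂ b (by omega), hg₂ b hsb.le, hf₂b]
  · rwa [hσ'₂ s has, hg₁ s le_rfl, hf₁s]

theorem exists_path_infinite_of_extension {x y : X} {a : ℕ} (h₀ : wordRel R (factor W 0 a) x y)
    (hG : G a y) : ∃ σ : ℕ → X, (∀ p, R (W p) (σ p) (σ (p + 1))) ∧ {p | Q p (σ p)}.Infinite := by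
  obtain ⟨σ₀, hσ₀, -, hσ₀a⟩ := exists_pathOn_of_wordRel h₀
  let Prefix := {st : (ℕ → X) × ℕ // PathOn R W st.1 0 st.2 ∧ G st.2 (st.1 st.2)}
  have hstep : ∀ st : Prefix, ∃ st' : Prefix, st.1.2 < st'.1.2 ∧
      (∀ q ≤ st.1.2, st'.1.1 q = st.1.1 q) ∧ ∃ s, st.1.2 ≤ s ∧ s < st'.1.2 ∧ Q s (st'.1.1 s) := by
    rintro ⟨⟨σ, a⟩, hσ, hG⟩
    obtain ⟨σ', b, hab, hσ', hG', hagree, hQ⟩ := exists_extension_of_pathOn hext hσ hG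
    exact ⟨⟨(σ', b), hσ', hG'⟩, hab, hagree, hQ⟩
  choose next hnext_lt hnext_agree s hs_ge hs_lt hs using hstep
  let st : ℕ → Prefix := fun n => next^[n] ⟨(σ₀, a), hσ₀, by simpa only [hσ₀a] using hG⟩
  have hst : ∀ n, st (n + 1) = next (st n) := fun n => Function.iterate_succ_apply' ..
  obtain ⟨τ, hτ, hτ_agree⟩ := exists_path_of_chain (fun n => (st n).1.1) (fun n => (st n).1.2)
    (strictMono_nat_of_lt_succ fun n => hst n ▸ hnext_lt _) (fun n => (st n).2.1)
    (fun n => hst n ▸ hnext_agree _)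
  refine ⟨τ, hτ, Set.infinite_of_injective_forall_mem (f := fun n => s (st n)) ?_ fun n => ?_⟩
  · refine (strictMono_nat_of_lt_succ fun n => ?_).injective
    have h₁ := hs_lt (st n)
    have h₂ := hs_ge (st (n + 1))
    rw [← hst] at h₁
    exact h₁.trans_le h₂
  · show Q (s (st n)) (τ (s (st n)))
    rw [hτ_agree (n + 1) _ (hst n ▸ (hs_lt (st n)).le), hst]
    exact hs (st n)

end Extension

theorem wpow_succ (w : List Letter) (i : ℕ) : wpow w (i + 1) = w ++ wpow w i := by
  simp [wpow, List.replicate_succ]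

theorem length_wpow (w : List Letter) (i : ℕ) : (wpow w i).length = i * w.length := by
  induction i with
  | zero => simp [wpow]
  | succ i ih => rw [wpow_succ, List.length_append, ih]; ring

-- The position of the `r`-th letter `c` of the snake word.
def blockStart (r : ℕ) : ℕ := 4 * r * (r + 1)

theorem blockStart_succ (r : ℕ) : blockStart (r + 1) = blockStart r + (8 * r + 8) := by
  unfold blockStart; ring

theorem blockStart_strictMono : StrictMono blockStart :=
  strictMono_nat_of_lt_succ fun r => by rw [blockStart_succ]; omega

theorem lt_blockStart_succ (p : ℕ) : p < blockStart (p + 1) := by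
  unfold blockStart; nlinarith

def snakePrefix (N : ℕ) : List Letter := ((List.range N).map snakeBlock).flatten

theorem snakePrefix_succ (N : ℕ) : snakePrefix (N + 1) = snakePrefix N ++ snakeBlock N := by
  simp [snakePrefix, List.range_succ]

theorem length_snakeBlock (r : ℕ) : (snakeBlock r).length = 8 * r + 8 := by
  simp [snakeBlock, length_wpow]; ring

theorem length_snakePrefix (N : ℕ) : (snakePrefix N).length = blockStart N := by
  induction N with
  | zero => rfl
  | succ N ih => rw [snakePrefix_succ, List.length_append, ih, length_snakeBlock, blockStart_succ]

theorem snakePrefix_prefix {N M : ℕ} (h : N ≤ M) : snakePrefix N <+: snakePrefix M := by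
  obtain ⟨k, rfl⟩ := Nat.exists_eq_add_of_le h
  rw [snakePrefix, snakePrefix, List.range_add, List.map_append]
  exact (List.prefix_append _ _).flatten

theorem factor_snakeWord_zero (N : ℕ) : factor snakeWord 0 (blockStart N) = snakePrefix N := by
  refine List.ext_getElem (by simp [length_snakePrefix]) fun p hp hp' => ?_
  have hp₁ : p < (snakePrefix (p + 1)).length := by
    rw [length_snakePrefix]; exact lt_blockStart_succ p
  have hsnake : snakeWord p = (snakePrefix (p + 1))[p] := List.getD_eq_getElem _ _ hp₁
  simp only [factor, List.getElem_map, List.getElem_range', zero_add, one_mul, hsnake]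
  rw [(snakePrefix_prefix (le_max_left _ N)).getElem hp₁,
    (snakePrefix_prefix (le_max_right (p + 1) N)).getElem hp']

theorem factor_snakeWord_blockStart (r : ℕ) :
    factor snakeWord (blockStart r) (blockStart (r + 1)) = snakeBlock r := by
  have h := factor_snakeWord_zero (r + 1)
  rw [← factor_append _ (Nat.zero_le _) (blockStart_strictMono r.lt_succ_self).le,
    factor_snakeWord_zero, snakePrefix_succ] at h
  exact List.append_cancel_left h

def piWord (i j : ℕ) : List Letter := wpow [.a1, .b2] i ++ [.d] ++ wpow [.a2, .b1] j ++ [.c]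

theorem snakeWord_blockStart_and_factor (r : ℕ) :
    snakeWord (blockStart r) = .c ∧ factor snakeWord (blockStart r + 1) (blockStart (r + 1)) =
      wpow [.a1, .b2] (2 * r + 1) ++ [.d] ++ wpow [.a2, .b1] (2 * r + 2) := by
  have h := factor_snakeWord_blockStart r
  rw [factor_eq_cons _ (blockStart_strictMono r.lt_succ_self)] at h
  simpa [snakeBlock] using h

theorem snakeWord_blockStart (r : ℕ) : snakeWord (blockStart r) = .c :=
  (snakeWord_blockStart_and_factor r).1

theorem factor_snakeWord_blockStart_add_one (r : ℕ) :
    factor snakeWord (blockStart r + 1) (blockStart (r + 1) + 1) =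
      piWord (2 * r + 1) (2 * r + 2) := by
  rw [factor_concat _ (by rw [blockStart_succ]; omega), (snakeWord_blockStart_and_factor r).2,
    snakeWord_blockStart]
  rfl

theorem firstCol_blockStart (r : ℕ) : FirstCol (blockStart r) :=
  Or.inl (snakeWord_blockStart r)

theorem firstCol_blockStart_add_three (r : ℕ) : FirstCol (blockStart r + 3) := by
  have h := factor_snakeWord_blockStart_add_one r
  rw [factor_eq_cons _ (by rw [blockStart_succ]; omega),
    factor_eq_cons _ (by rw [blockStart_succ]; omega)] at h
  simp only [piWord, wpow_succ, List.cons_append, List.cons.injEq] at h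
  exact Or.inr ⟨by omega, by simpa using snakeWord_blockStart r, h.1, h.2.1⟩

section Snake

variable {R : Letter → X → X → Prop} {x y z : X}

theorem tokRel_append {T : X → Prop} {u v : List Tok} :
    tokRel R T (u ++ v) x z ↔ ∃ y, tokRel R T u x y ∧ tokRel R T v y z := by
  induction u generalizing x with
  | nil => simp [tokRel]
  | cons t u ih => cases t <;> simp only [List.cons_append, tokRel, ih] <;> aesop

theorem tokRel_map_letter {T : X → Prop} {w : List Letter} :
    tokRel R T (w.map Tok.letter) x z ↔ wordRel R w x z := by
  induction w generalizing x with
  | nil => rfl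
  | cons a w ih => simp only [List.map_cons, tokRel, wordRel, ih]

theorem wordRel_piWord {i j : ℕ} :
    wordRel R (piWord i j) x z ↔ ∃ m, wordRel R (wpow [.a1, .b2] i ++ [.d]) x m ∧
      wordRel R (wpow [.a2, .b1] j ++ [.c]) m z := by
  rw [piWord, List.append_assoc _ (wpow _ j), wordRel_append]

theorem tokRel_of_mem_beta {T : X → Prop} {w : List Tok} (hw : w ∈ beta)
    (h : tokRel R T w y z) :
    ∃ ws : List (List Letter), (∀ u ∈ ws, u ∈ piNS) ∧ ∃ u v : List Letter, u ++ v ∈ piNS ∧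
      (u = [.a1, .b2] ∨ v = [.c]) ∧ ∃ y' zt, wordRel R ws.flatten y y' ∧
        wordRel R u y' zt ∧ T zt ∧ wordRel R v zt z := by
  obtain ⟨_, v, ⟨_, ⟨ws, hws, rfl⟩, rfl⟩, hv, rfl⟩ := hw
  obtain ⟨y', hws', hv'⟩ := tokRel_append.1 h
  refine ⟨ws, hws, ?_⟩
  rcases hv with ⟨p, ⟨i, j, rfl⟩, rfl⟩ | ⟨i, j, rfl⟩
  · obtain ⟨y₁, h₁, zt, h₂, hT, hp⟩ := hv'
    exact ⟨[.a1, .b2], _, ⟨i + 1, j, by simp [wpow_succ]⟩, Or.inl rfl, y', zt,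
      tokRel_map_letter.1 hws', ⟨y₁, h₁, zt, h₂, rfl⟩, hT, tokRel_map_letter.1 hp⟩
  · rw [show ∀ u v : List Letter, u.map Tok.letter ++ [Tok.letter .d] ++ v.map Tok.letter ++
        [Tok.test, Tok.letter .c] =
          (u ++ [Letter.d] ++ v).map Tok.letter ++ [Tok.test, Tok.letter .c] by simp] at hv'
    obtain ⟨zt, hu, hT, hc⟩ := tokRel_append.1 hv'
    exact ⟨_, [.c], ⟨i, j, rfl⟩, Or.inr rfl, y', zt, tokRel_map_letter.1 hws',
      tokRel_map_letter.1 hu, hT, hc⟩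

def ReachedBy (R : Letter → X → X → Prop) (x : X) (a : Letter) (y : X) : Prop :=
  ∃ u, wordRel R (u ++ [a]) x y

theorem ReachedBy.of_wordRel {a b : Letter} {v : List Letter} (hy : ReachedBy R x a y)
    (h : wordRel R (v ++ [b]) y z) : ReachedBy R x b z := by
  obtain ⟨u, hu⟩ := hy
  exact ⟨u ++ [a] ++ v, by rw [List.append_assoc (u ++ [a])]; exact wordRel_append.2 ⟨y, hu, h⟩⟩

def BlockEntry (R : Letter → X → X → Prop) (x : X) (r : ℕ) (y : X) : Prop :=
  ReachedBy R x .c y ∧ ∃ w, ReachedBy R x .d w ∧ wordRel R (wpow [.a2, .b1] (2 * r) ++ [.c]) w y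

theorem PhiSnake.eq_succ_of_reachedBy_c (hs : PhiSnake R x) (hy : ReachedBy R x .c y) {i j : ℕ}
    (h : wordRel R (piWord i j) y z) : j = i + 1 := by
  by_contra hne
  exact (hs.2.1 y hy).2 ⟨z, _, ⟨i, j, hne, rfl⟩, h⟩

theorem PhiSnake.eq_succ_of_reachedBy_d (hs : PhiSnake R x) {w : X} (hw : ReachedBy R x .d w)
    {m i : ℕ} (h : wordRel R (wpow [.a2, .b1] m ++ [.c] ++ wpow [.a1, .b2] i ++ [.d]) w z) :
    i = m + 1 := by
  by_contra hne
  exact (hs.2.2 w hw).2 ⟨z, _, ⟨m, i, hne, rfl⟩, h⟩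

theorem PhiSnake.blockEntry_of_mem_piNS (hs : PhiSnake R x) {r : ℕ} (hy : BlockEntry R x r y)
    {p : List Letter} (hp : p ∈ piNS) (h : wordRel R p y z) :
    p = piWord (2 * r + 1) (2 * r + 2) ∧ BlockEntry R x (r + 1) z := by
  obtain ⟨i, j, rfl⟩ := hp
  obtain ⟨hyc, w, hw, hwy⟩ := hy
  obtain ⟨m, h₁, h₂⟩ := wordRel_piWord.1 h
  have hi : i = 2 * r + 1 := hs.eq_succ_of_reachedBy_d hw
    (by rw [List.append_assoc _ (wpow _ i)]; exact wordRel_append.2 ⟨y, hwy, h₁⟩)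
  have hj : j = i + 1 := hs.eq_succ_of_reachedBy_c hyc h
  subst hi hj
  exact ⟨rfl, hyc.of_wordRel h, m, hyc.of_wordRel h₁, h₂⟩

theorem PhiSnake.blockEntry_of_mem_star (hs : PhiSnake R x) {ws : List (List Letter)}
    (hws : ∀ u ∈ ws, u ∈ piNS) {r : ℕ} (hy : BlockEntry R x r y) (h : wordRel R ws.flatten y z) :
    ∃ r', r ≤ r' ∧ ws.flatten = factor snakeWord (blockStart r + 1) (blockStart r' + 1) ∧
      BlockEntry R x r' z := by
  induction ws generalizing r y with
  | nil => exact ⟨r, le_rfl, by simp, (h : y = z) ▸ hy⟩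
  | cons p ws ih =>
    rw [List.flatten_cons] at h ⊢
    obtain ⟨y₁, h₁, h₂⟩ := wordRel_append.1 h
    obtain ⟨rfl, hy₁⟩ := hs.blockEntry_of_mem_piNS hy (hws p List.mem_cons_self) h₁
    obtain ⟨r', hr', hws', hz⟩ := ih (fun u hu => hws u (List.mem_cons_of_mem _ hu)) hy₁ h₂
    refine ⟨r', by omega, ?_, hz⟩
    rw [hws', ← factor_snakeWord_blockStart_add_one,
      factor_append _ (by rw [blockStart_succ]; omega)
        (Nat.succ_le_succ (blockStart_strictMono.monotone hr'))]

theorem PhiSnake.exists_blockEntry_one (hs : PhiSnake R x) :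
    ∃ y, wordRel R (factor snakeWord 0 (blockStart 1 + 1)) x y ∧ BlockEntry R x 1 y := by
  obtain ⟨y, hy⟩ := hs.1
  have hfac : factor snakeWord 0 (blockStart 1 + 1) =
      [.c, .a1, .b2, .d, .a2, .b1, .a2, .b1, .c] := by
    decide
  obtain ⟨w, hw, hwy⟩ := wordRel_append (u := [.c, .a1, .b2, .d]).1 hy
  exact ⟨y, hfac ▸ hy, ⟨[.c, .a1, .b2, .d, .a2, .b1, .a2, .b1], hy⟩, w, ⟨[.c, .a1, .b2], hw⟩, hwy⟩

theorem PhiSnake.exists_extension {P : Type} {ρ : X → Set P} {t0 : P} (hs : PhiSnake R x)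
    (hr : PhiRecur R ρ t0 x) {r : ℕ} (hy : BlockEntry R x r y) :
    ∃ s r' zt z, blockStart r + 1 ≤ s ∧ s < blockStart r' + 1 ∧ (t0 ∈ ρ zt ∧ FirstCol s) ∧
      BlockEntry R x r' z ∧ wordRel R (factor snakeWord (blockStart r + 1) s) y zt ∧
      wordRel R (factor snakeWord s (blockStart r' + 1)) zt z := by
  obtain ⟨z, w, hw, h⟩ := hr y hy.1
  obtain ⟨ws, hws, u, v, huv, hsplit, y', zt, h₀, hu, hT, hv⟩ := tokRel_of_mem_beta hw h
  obtain ⟨r₁, hr₁, hfl, hy'⟩ := hs.blockEntry_of_mem_star hws hy h₀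
  obtain ⟨huv', hz⟩ := hs.blockEntry_of_mem_piNS hy' huv (wordRel_append.2 ⟨zt, hu, hv⟩)
  rw [← factor_snakeWord_blockStart_add_one] at huv'
  obtain ⟨hu', hv'⟩ := eq_factor_of_append_eq _ (by rw [blockStart_succ]; omega) huv'
  set s := blockStart r₁ + 1 + u.length
  have hcol : s < blockStart (r₁ + 1) + 1 ∧ FirstCol s := by
    rcases hsplit with rfl | rfl
    · refine ⟨?_, firstCol_blockStart_add_three r₁⟩
      simp only [s, blockStart_succ, List.length_cons, List.length_nil]
      omega
    · have hlen := congrArg List.length hv'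
      simp only [List.length_singleton, length_factor] at hlen
      rw [show s = blockStart (r₁ + 1) by omega]
      exact ⟨lt_add_one _, firstCol_blockStart _⟩
  refine ⟨s, r₁ + 1, zt, z, ?_, hcol.1, ⟨hT, hcol.2⟩, hz, ?_, hv' ▸ hv⟩
  · have := blockStart_strictMono.monotone hr₁
    omega
  · rw [← factor_append _ (Nat.succ_le_succ (blockStart_strictMono.monotone hr₁))
      (Nat.le_add_right _ _)]
    exact wordRel_append.2 ⟨y', hfl ▸ h₀, hu' ▸ hu⟩

end Snake

end

/-- If some world of a Kripke structure satisfies both `φ_snake` and `φ_recur`, then the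
structure contains a snake on which infinitely many first-column worlds satisfy `t₀`. -/
theorem snake_with_recurring_t0 {X : Type} (R : Letter → X → X → Prop)
    {P : Type} (ρ : X → Set P) (t0 : P) (x : X)
    (hs : PhiSnake R x) (hr : PhiRecur R ρ t0 x) :
    ∃ σ : ℕ → X, IsSnake R σ ∧
      {p : ℕ | t0 ∈ ρ (σ p) ∧ FirstCol p}.Infinite := by
  obtain ⟨y, h₀, hy⟩ := hs.exists_blockEntry_one
  refine exists_path_infinite_of_extension
    (G := fun a y => ∃ r, a = blockStart r + 1 ∧ BlockEntry R x r y)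
    (Q := fun p y => t0 ∈ ρ y ∧ FirstCol p) ?_ h₀ ⟨1, rfl, hy⟩
  rintro _ y ⟨r, rfl, hy⟩
  obtain ⟨s, r', zt, z, h₁, h₂, hQ, hz, h⟩ := hs.exists_extension hr hy
  exact ⟨s, _, zt, z, h₁, h₂, hQ, ⟨r', rfl, hz⟩, h⟩
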